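/- arXiv:0802.1959 — 3 statements merged into one kernel-verified Lean document; each statement's English description precedes it below -/
import Mathlib

section
/- Consider the map Φ : ℝ² → ℝ² given by Φ(X, Y) = (Y, max(0, Y) − X). Then Φ⁵ is the identity map on ℝ². -/
def Phi : ℝ × ℝ → ℝ × ℝ := fun p => (p.2, max 0 p.2 - p.1)

/-!
The orbit of `(x, y)` under the recurrence `u (n+1) = max 0 (u n) - u (n-1)` is
`x, y, y⁺ - x, max(-x, -y, -x-y), x⁺ - y, x, y`, where `a⁺ = max 0 a`.
Each step is the max-plus shadow of a step of the Lyness map `(1 + y) / x`: the key identity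
`a⁺ + b⁺ = max(0, a, b, a + b)` is the tropical form of `(1 + a)(1 + b) = 1 + a + b + ab`, and the
fourth term, being symmetric in `x` and `y`, is what lets the orbit run backwards to `(x, y)`.
-/

section MaxPlus

variable {α : Type*} [AddCommGroup α] [LinearOrder α] [IsOrderedAddMonoid α]

theorem max_zero_add_max_zero (a b : α) :
    max 0 a + max 0 b = max 0 (max (max a b) (a + b)) := by
  rw [max_add, zero_add, add_max, add_zero]
  ac_rfl

theorem max_zero_neg_add_self (a : α) : max 0 (-a) + a = max 0 a := by
  rw [add_comm, add_max, add_zero, add_neg_cancel, max_comm]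

theorem max_zero_max_zero_sub_sub (x y : α) :
    max 0 (max 0 y - x) - y = max (max (-x) (-y)) (-(x + y)) := by
  rw [← max_sub_sub_right, sub_sub, ← max_sub_sub_right, zero_sub, zero_sub,
    sub_add_cancel_right]
  ac_rfl

end MaxPlus

theorem Phi_iterate_three (x y : ℝ) :
    Phi^[3] (x, y) = (max (max (-x) (-y)) (-(x + y)), max 0 x - y) := by
  simp only [Function.iterate_succ, Function.comp_apply, Function.iterate_zero, id, Phi]
  rw [max_zero_max_zero_sub_sub, neg_add, ← max_zero_add_max_zero]
  congr 1
  linarith [max_zero_neg_add_self x, max_zero_neg_add_self y]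

theorem Phi_five_periodic : ∀ p : ℝ × ℝ, Phi^[5] p = p := by
  rintro ⟨x, y⟩
  have hsymm : max 0 (max 0 x - y) - max (max (-x) (-y)) (-(x + y)) = x := by
    rw [max_comm (-x), add_comm, ← max_zero_max_zero_sub_sub, sub_sub_cancel]
  calc Phi^[5] (x, y) = Phi^[2] (Phi^[3] (x, y)) := Function.iterate_add_apply Phi 2 3 _
    _ = Phi (max 0 x - y, max 0 (max 0 x - y) - max (max (-x) (-y)) (-(x + y))) := by
      rw [Phi_iterate_three]; rfl
    _ = (x, y) := by rw [hsymm, Phi, sub_sub_cancel]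
end

section
/- Every solution (W_n) in ℝ of the recurrence W_{n+1} + W_{n−1} = max(W_n, 0) is periodic with period 5, i.e., W_{n+5} = W_n for all n. -/
/-! The pair `(W (n - 1), W n)` evolves under the map `(a, b) ↦ (b, max b 0 - a)`, the
tropicalization of the Lyness map `(a, b) ↦ (b, (b + 1) / a)`. The orbit of `(a, b)` reads
`a, b, max b 0 - a, max a b 0 - a - b, max a 0 - b, a, b`, the tropical image of the
Lyness orbit `a, b, (b + 1) / a, (a + b + 1) / (a b), (a + 1) / b, a, b`, so the map has
period five. -/

def tropicalLynessMap (p : ℝ × ℝ) : ℝ × ℝ := (p.2, max p.2 0 - p.1)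

theorem tropicalLynessMap_isPeriodicPt_five (p : ℝ × ℝ) :
    Function.IsPeriodicPt tropicalLynessMap 5 p := by
  obtain ⟨a, b⟩ := p
  have h₃ : max (max b 0 - a) 0 - b = max (max a b) 0 - a - b := by grind
  have h₄ : max (max (max a b) 0 - a - b) 0 - (max b 0 - a) = max a 0 - b := by grind
  have h₅ : max (max a 0 - b) 0 - (max (max a b) 0 - a - b) = a := by grind
  have h₆ : max a 0 - (max a 0 - b) = b := by ring
  simp only [Function.IsPeriodicPt, Function.IsFixedPt, Function.iterate_succ_apply',
    Function.iterate_zero_apply, tropicalLynessMap, h₃, h₄, h₅, h₆]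

theorem tropicalLynessMap_semiconj {W : ℤ → ℝ}
    (h : ∀ n : ℤ, W (n + 1) + W (n - 1) = max (W n) 0) :
    Function.Semiconj (fun n => (W n, W (n + 1))) (· + 1) tropicalLynessMap := by
  intro n
  have hn := h (n + 1)
  simp only [add_sub_cancel_right] at hn
  simp only [tropicalLynessMap, Prod.mk.injEq, true_and]
  linarith

theorem ud_recurrence_five_periodic (W : ℤ → ℝ)
    (h : ∀ n : ℤ, W (n + 1) + W (n - 1) = max (W n) 0) :
    ∀ n : ℤ, W (n + 5) = W n := by
  intro n
  have horbit := (tropicalLynessMap_semiconj h).iterate_right 5 n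
  rw [add_right_iterate_apply, (tropicalLynessMap_isPeriodicPt_five _).eq] at horbit
  simpa using congrArg Prod.fst horbit
end

section
/- Fix W₀ ∈ ℝ. The function δ ↦ W₄(W₀, δ), where W₄ is the fourth iterate of the recurrence W_{n+1} = max(W_n, 0) − W_{n−1} with initial data (W₀, δ), equals max(0, W₀) − δ for all δ with 0 < |δ| < |W₀| (assuming W₀ ≠ 0), and hence is differentiable at δ = 0 with derivative −1. -/
/-!
With `W₂ = δ⁺ - W₀`, `W₃ = W₂⁺ - δ` and `W₄ = W₃⁺ - W₂`, the kinks of `W₂` and `W₃` at `δ = 0`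
cancel in `W₄`: if `W₀ ≤ 0` then `W₂, W₃ ≥ 0` and `W₄ = -δ` for every `δ`; if `δ ≤ W₀` with
`W₀ ≥ 0` then `W₂ ≤ 0`, `W₃ = -δ` and `W₄ = (-δ)⁺ - δ⁺ + W₀ = W₀ - δ`.
Either way `W₄ = W₀⁺ - δ` on a neighbourhood of `δ = 0`, where it is affine.
-/

/-- One step of the recurrence W_{n+1} = max(W_n, 0) − W_{n−1}, acting on pairs
(W_{n−1}, W_n) ↦ (W_n, W_{n+1}). -/
def udStep : ℝ × ℝ → ℝ × ℝ := fun p => (p.2, max p.2 0 - p.1)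

lemma udStep_iterate_three_snd_def (a d : ℝ) :
    (udStep^[3] (a, d)).2 = max (max (max d 0 - a) 0 - d) 0 - (max d 0 - a) := rfl

lemma udStep_iterate_three_snd_of_nonpos {a : ℝ} (ha : a ≤ 0) (d : ℝ) :
    (udStep^[3] (a, d)).2 = -d := by
  have hW₂ : 0 ≤ max d 0 - a := by linarith [le_max_right d 0]
  have hW₃ : 0 ≤ max d 0 - a - d := by linarith [le_max_left d 0]
  rw [udStep_iterate_three_snd_def, max_eq_left hW₂, max_eq_left hW₃]
  ring

lemma udStep_iterate_three_snd_of_le {a d : ℝ} (ha : 0 ≤ a) (hd : d ≤ a) :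
    (udStep^[3] (a, d)).2 = a - d := by
  have hW₂ : max d 0 - a ≤ 0 := by linarith [max_le hd ha]
  rw [udStep_iterate_three_snd_def, max_eq_right hW₂, zero_sub]
  linarith [max_zero_sub_max_neg_zero_eq_self d]

lemma udStep_iterate_three_snd_eq {a d : ℝ} (h : a ≤ 0 ∨ d ≤ a) :
    (udStep^[3] (a, d)).2 = max 0 a - d := by
  rcases le_or_gt a 0 with ha | ha
  · rw [udStep_iterate_three_snd_of_nonpos ha, max_eq_left ha, zero_sub]
  · rw [udStep_iterate_three_snd_of_le ha.le (h.resolve_left ha.not_ge), max_eq_right ha.le]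

theorem ud_fourth_iterate_differentiable_general (W₀ : ℝ) :
    (∀ δ : ℝ, 0 < |δ| → |δ| < |W₀| →
      (udStep^[3] (W₀, δ)).2 = max 0 W₀ - δ) ∧
    HasDerivAt (fun δ : ℝ => (udStep^[3] (W₀, δ)).2) (-1) 0 := by
  refine ⟨fun δ _ hδ => udStep_iterate_three_snd_eq ?_, ?_⟩
  · refine (le_or_gt W₀ 0).imp_right fun hW₀ => ?_
    exact ((le_abs_self δ).trans_lt (hδ.trans_eq (abs_of_pos hW₀))).le
  · have hnear : ∀ᶠ δ in nhds 0, W₀ ≤ 0 ∨ δ ≤ W₀ := by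
      rcases le_or_gt W₀ 0 with hW₀ | hW₀
      · exact Filter.Eventually.of_forall fun _ => Or.inl hW₀
      · exact Filter.mem_of_superset (Iic_mem_nhds hW₀) fun _ => Or.inr
    exact ((hasDerivAt_id' 0).const_sub (max 0 W₀)).congr_of_eventuallyEq
      (hnear.mono fun _ => udStep_iterate_three_snd_eq)

theorem ud_fourth_iterate_differentiable (W₀ : ℝ) (hW₀ : W₀ ≠ 0) :
    (∀ δ : ℝ, 0 < |δ| → |δ| < |W₀| →
      (udStep^[3] (W₀, δ)).2 = max 0 W₀ - δ) ∧
    HasDerivAt (fun δ : ℝ => (udStep^[3] (W₀, δ)).2) (-1) 0 :=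
  ud_fourth_iterate_differentiable_general W₀
end
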